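/- arXiv:2312.13147 — 5 statements merged into one kernel-verified Lean document; each statement's English description precedes it below -/
import Mathlib

section
/- Let M₀ ⊆ ℝ^D, let z, z₀ ∈ ℝ^D, let x₀ ∈ M₀ and x ∈ M₀, and let α' > 0. Assume that for all y ∈ M₀: ‖y - z‖² ≥ ‖x - z‖² + α'‖y - x‖², and that ‖x - z₀‖² ≥ ‖x₀ - z₀‖² + α'‖x₀ - x‖² (taking y = x, base point x₀, center z₀) and ‖x₀ - z‖² ≥ ‖x - z‖² + α'‖x₀ - x‖². Then ‖x - x₀‖ ≤ (1/α')·‖z - z₀‖. -/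
/-!
Adding the two quadratic growth inequalities, the four squared distances combine into
`2 ⟪x - x₀, z - z₀⟫`, so `α' ‖x - x₀‖² ≤ ⟪x - x₀, z - z₀⟫ ≤ ‖x - x₀‖ ‖z - z₀‖` by Cauchy–Schwarz;
dividing by `α' ‖x - x₀‖` gives the Lipschitz bound.
-/

open RealInnerProductSpace

section

variable {E : Type*} [NormedAddCommGroup E] [InnerProductSpace ℝ E]

theorem two_mul_real_inner_sub_sub (a b c d : E) :
    2 * ⟪a - b, c - d⟫ = ‖a - d‖ ^ 2 + ‖b - c‖ ^ 2 - ‖b - d‖ ^ 2 - ‖a - c‖ ^ 2 := by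
  simp only [norm_sub_sq_real, inner_sub_left, inner_sub_right, real_inner_comm c b,
    real_inner_comm d b]
  ring

theorem norm_le_one_div_mul_norm_of_mul_norm_sq_le_inner {α : ℝ} (hα : 0 < α) {u v : E}
    (h : α * ‖u‖ ^ 2 ≤ ⟪u, v⟫) : ‖u‖ ≤ (1 / α) * ‖v‖ := by
  have hcs : α * ‖u‖ * ‖u‖ ≤ ‖v‖ * ‖u‖ :=
    calc α * ‖u‖ * ‖u‖ = α * ‖u‖ ^ 2 := by ring
      _ ≤ ⟪u, v⟫ := h
      _ ≤ ‖u‖ * ‖v‖ := real_inner_le_norm u v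
      _ = ‖v‖ * ‖u‖ := mul_comm _ _
  rcases (norm_nonneg u).eq_or_lt with hu | hu
  · rw [← hu]
    positivity
  · rw [one_div_mul_eq_div, le_div_iff₀ hα, mul_comm]
    exact le_of_mul_le_mul_right hcs hu

end

theorem stmt_3_general {D : ℕ}
    (z z₀ x₀ x : EuclideanSpace ℝ (Fin D))
    (α' : ℝ) (hα' : 0 < α')
    (h2 : ‖x₀ - z₀‖ ^ 2 + α' * ‖x₀ - x‖ ^ 2 ≤ ‖x - z₀‖ ^ 2)
    (h3 : ‖x - z‖ ^ 2 + α' * ‖x₀ - x‖ ^ 2 ≤ ‖x₀ - z‖ ^ 2) :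
    ‖x - x₀‖ ≤ (1 / α') * ‖z - z₀‖ := by
  have hmono : α' * ‖x - x₀‖ ^ 2 ≤ ⟪x - x₀, z - z₀⟫ := by
    have hfour := two_mul_real_inner_sub_sub x x₀ z z₀
    rw [norm_sub_rev x₀ x] at h2 h3
    linarith
  exact norm_le_one_div_mul_norm_of_mul_norm_sq_le_inner hα' hmono

/-- Algebraic core of the Lipschitz-continuity-of-projection lemma. -/
theorem stmt_3 {D : ℕ} (M₀ : Set (EuclideanSpace ℝ (Fin D)))
    (z z₀ x₀ x : EuclideanSpace ℝ (Fin D)) (hx₀ : x₀ ∈ M₀) (hx : x ∈ M₀)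
    (α' : ℝ) (hα' : 0 < α')
    (h1 : ∀ y ∈ M₀, ‖x - z‖ ^ 2 + α' * ‖y - x‖ ^ 2 ≤ ‖y - z‖ ^ 2)
    (h2 : ‖x₀ - z₀‖ ^ 2 + α' * ‖x₀ - x‖ ^ 2 ≤ ‖x - z₀‖ ^ 2)
    (h3 : ‖x - z‖ ^ 2 + α' * ‖x₀ - x‖ ^ 2 ≤ ‖x₀ - z‖ ^ 2) :
    ‖x - x₀‖ ≤ (1 / α') * ‖z - z₀‖ :=
  stmt_3_general z z₀ x₀ x α' hα' h2 h3
end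

section
/- Let M ⊆ ℝ^D be a compact set contained in a set with convex hull K = Conv(M), with diam(M) > 0. For x ∈ ℝ^D with d(x, K) ≥ L for some L > 0, any two points y₁, y₂ ∈ π_M(x) satisfy ‖y₁ − y₂‖ ≤ diam(M), and hence the center m of the smallest enclosing ball of π_M(x) satisfies ‖x − m‖ ≥ sqrt(L² − diam(M)²/2) wherever L² ≥ diam(M)²/2; consequently the generalized gradient norm ‖∇d_M(x)‖ = ‖x − m‖ / d(x,M) is at least sqrt(L² − diam(M)²/2) / (L + diam(M)) whenever d(x, Conv(M)) = L and L² ≥ diam(M)²/2. -/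
/-!
The centre of a smallest enclosing ball of a set `σ` lies in the closed convex hull of `σ`:
projecting it onto that hull brings it closer to every point of `σ` (the projection makes an
obtuse angle with the hull), which would give a strictly smaller enclosing ball. Hence the centre
`c` for the nearest points of `x` lies in the closed convex hull of `M`, so `dist x c ≥ L`, which
already dominates `√(L² - diam² / 2)`. For the gradient bound, `conv M` has the same diameter as
`M`, so any point of `M` is within `L + diam M` of `x` when `d(x, conv M) = L`.
-/

open Metric

section MinEnclosingBall

variable {E : Type*} [NormedAddCommGroup E] [InnerProductSpace ℝ E]

def IsMinEnclosingBall (σ : Set E) (c : E) (r : ℝ) : Prop :=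
  (∀ y ∈ σ, dist y c ≤ r) ∧ ∀ (c' : E) (r' : ℝ), (∀ y ∈ σ, dist y c' ≤ r') → r ≤ r'

lemma dist_sq_add_dist_sq_le_of_norm_eq_iInf {K : Set E} (hK : Convex ℝ K) {c p : E}
    (hpK : p ∈ K) (hp : ‖c - p‖ = ⨅ w : K, ‖c - w‖) {y : E} (hy : y ∈ K) :
    dist y p ^ 2 + dist c p ^ 2 ≤ dist y c ^ 2 := by
  have hobtuse : inner ℝ (y - p) (c - p) ≤ 0 := by
    rw [real_inner_comm]
    exact (norm_eq_iInf_iff_real_inner_le_zero hK hpK).mp hp y hy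
  have hsplit : y - c = (y - p) - (c - p) := by abel
  rw [dist_eq_norm y p, dist_eq_norm c p, dist_eq_norm y c, hsplit,
    norm_sub_sq_real (y - p) (c - p)]
  linarith

lemma IsMinEnclosingBall.mem_closure_convexHull [CompleteSpace E] {σ : Set E} {c : E} {r : ℝ}
    (h : IsMinEnclosingBall σ c r) : c ∈ closure (convexHull ℝ σ) := by
  obtain ⟨y₀, hy₀⟩ : σ.Nonempty := by
    by_contra hσ
    rw [Set.not_nonempty_iff_eq_empty] at hσ
    linarith [h.2 c (r - 1) (by simp [hσ])]
  set K := closure (convexHull ℝ σ)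
  have hK : Convex ℝ K := (convex_convexHull ℝ σ).closure
  obtain ⟨p, hpK, hp⟩ := exists_norm_eq_iInf_of_complete_convex
    ⟨y₀, subset_closure (subset_convexHull ℝ σ hy₀)⟩ isClosed_closure.isComplete hK c
  have hcloser : ∀ y ∈ σ, dist y p ^ 2 ≤ r ^ 2 - dist c p ^ 2 := fun y hy => by
    have := dist_sq_add_dist_sq_le_of_norm_eq_iInf hK hpK hp
      (subset_closure (subset_convexHull ℝ σ hy))
    nlinarith [h.1 y hy, dist_nonneg (x := y) (y := c)]
  have hr : 0 ≤ r := dist_nonneg.trans (h.1 y₀ hy₀)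
  have hrr : r ≤ √(r ^ 2 - dist c p ^ 2) :=
    h.2 p _ fun y hy => Real.le_sqrt_of_sq_le (hcloser y hy)
  have hcp : dist c p ^ 2 = 0 := by
    have := (Real.le_sqrt hr (by nlinarith [hcloser y₀ hy₀])).mp hrr
    linarith [sq_nonneg (dist c p)]
  rwa [dist_eq_zero.mp (pow_eq_zero_iff two_ne_zero |>.mp hcp)]

end MinEnclosingBall

lemma infDist_le_infDist_convexHull_add_diam {E : Type*} [SeminormedAddCommGroup E]
    [NormedSpace ℝ E] {M : Set E} (hM : Bornology.IsBounded M) (hne : M.Nonempty) (x : E) :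
    infDist x M ≤ infDist x (convexHull ℝ M) + diam M := by
  obtain ⟨y₀, hy₀⟩ := id hne
  rw [← sub_le_iff_le_add, le_infDist (hne.mono (subset_convexHull ℝ M))]
  intro q hq
  have hq₀ : dist q y₀ ≤ diam M := convexHull_diam M ▸
    dist_le_diam_of_mem (isBounded_convexHull.mpr hM) hq (subset_convexHull ℝ M hy₀)
  linarith [infDist_le_dist_of_mem (x := x) hy₀, dist_triangle x q y₀]

theorem stmt_6_general {D : ℕ} (M : Set (EuclideanSpace ℝ (Fin D))) (hM : IsCompact M)
    (hMne : M.Nonempty)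
    (x c : EuclideanSpace ℝ (Fin D)) (L r : ℝ) (hL : 0 < L)
    (hx : L ≤ Metric.infDist x (convexHull ℝ M))
    (hc : ∀ y ∈ {y | y ∈ M ∧ dist y x = Metric.infDist x M}, dist y c ≤ r)
    (hcmin : ∀ (c' : EuclideanSpace ℝ (Fin D)) (r' : ℝ),
      (∀ y ∈ {y | y ∈ M ∧ dist y x = Metric.infDist x M}, dist y c' ≤ r') → r ≤ r') :
    (∀ y₁ ∈ {y | y ∈ M ∧ dist y x = Metric.infDist x M},
      ∀ y₂ ∈ {y | y ∈ M ∧ dist y x = Metric.infDist x M},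
        dist y₁ y₂ ≤ Metric.diam M) ∧
    (Metric.diam M ^ 2 / 2 ≤ L ^ 2 →
      Real.sqrt (L ^ 2 - Metric.diam M ^ 2 / 2) ≤ dist x c) ∧
    (Metric.infDist x (convexHull ℝ M) = L → Metric.diam M ^ 2 / 2 ≤ L ^ 2 →
      Real.sqrt (L ^ 2 - Metric.diam M ^ 2 / 2) / (L + Metric.diam M) ≤
        dist x c / Metric.infDist x M) := by
  have hLM : L ≤ infDist x M :=
    hx.trans (infDist_le_infDist_of_subset (subset_convexHull ℝ M) hMne)
  have hcK : c ∈ closure (convexHull ℝ M) :=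
    closure_mono (convexHull_mono fun _ hy => hy.1)
      (IsMinEnclosingBall.mem_closure_convexHull ⟨hc, hcmin⟩)
  have hLc : L ≤ dist x c :=
    calc L ≤ infDist x (convexHull ℝ M) := hx
    _ = infDist x (closure (convexHull ℝ M)) := infDist_closure.symm
    _ ≤ dist x c := infDist_le_dist_of_mem hcK
  have hsqrt : √(L ^ 2 - diam M ^ 2 / 2) ≤ dist x c :=
    (Real.sqrt_le_left hL.le |>.mpr (sub_le_self _ (by positivity))).trans hLc
  refine ⟨fun y₁ h₁ y₂ h₂ => dist_le_diam_of_mem hM.isBounded h₁.1 h₂.1, fun _ => hsqrt,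
    fun hLeq _ => ?_⟩
  have hdenom := infDist_le_infDist_convexHull_add_diam hM.isBounded hMne x
  rw [hLeq] at hdenom
  exact div_le_div₀ dist_nonneg hsqrt (hL.trans_le hLM) hdenom

/-- Projections of a far-away point `x` lie within `diam M` of each other; the center `m`
of their smallest enclosing ball is far from `x`, and the generalized gradient norm of the
distance function at `x` is bounded below. -/
theorem stmt_6 {D : ℕ} (M : Set (EuclideanSpace ℝ (Fin D))) (hM : IsCompact M)
    (hMne : M.Nonempty) (hdiam : 0 < Metric.diam M)
    (x c : EuclideanSpace ℝ (Fin D)) (L r : ℝ) (hL : 0 < L)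
    (hx : L ≤ Metric.infDist x (convexHull ℝ M))
    (hc : ∀ y ∈ {y | y ∈ M ∧ dist y x = Metric.infDist x M}, dist y c ≤ r)
    (hcmin : ∀ (c' : EuclideanSpace ℝ (Fin D)) (r' : ℝ),
      (∀ y ∈ {y | y ∈ M ∧ dist y x = Metric.infDist x M}, dist y c' ≤ r') → r ≤ r') :
    (∀ y₁ ∈ {y | y ∈ M ∧ dist y x = Metric.infDist x M},
      ∀ y₂ ∈ {y | y ∈ M ∧ dist y x = Metric.infDist x M},
        dist y₁ y₂ ≤ Metric.diam M) ∧
    (Metric.diam M ^ 2 / 2 ≤ L ^ 2 →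
      Real.sqrt (L ^ 2 - Metric.diam M ^ 2 / 2) ≤ dist x c) ∧
    (Metric.infDist x (convexHull ℝ M) = L → Metric.diam M ^ 2 / 2 ≤ L ^ 2 →
      Real.sqrt (L ^ 2 - Metric.diam M ^ 2 / 2) / (L + Metric.diam M) ≤
        dist x c / Metric.infDist x M) :=
  stmt_6_general M hM hMne x c L r hL hx hc hcmin
end

section
/- Let z, x₁, …, x_s ∈ ℝ^D be such that the x_i are pairwise distinct and z lies in the convex hull of {x₁,…,x_s}, and suppose z − x_j ∈ E := span{x_{j₁} − x_{j₂} : 1 ≤ j₁, j₂ ≤ s} for all j. If points y_j satisfy ‖y_j − (x_j + h)‖ ≤ L‖h‖ and |⟨z − x_j, x_j + h − y_j⟩ − ⟨z − x_j, h⟩| ≤ C₁‖h‖² for all j and some h ∈ E^⊥, and additionally ‖y_{j₁} − w‖ = ‖y_{j₂} − w‖ for all j₁, j₂ for some point w = z + h + e with e ∈ ℝ^D, then the projection of e onto E satisfies ‖π_E(e)‖ ≤ C₄(‖h‖ + ‖e‖)² for some constant C₄ depending only on the geometry of the simplex with vertices x₁,…,x_s, on L, and on C₁. -/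
/-! Write `t = ‖h‖ + ‖e‖` and `w = z + h + e`. Expanding around `x j`, with `⟪z - x j, h⟫ = 0`,
gives `‖y j - w‖² = ‖z - x j‖² + 2⟪z - x j, e⟫ + O(t²)`, so equidistance pins each
`⟪x j₁ - x j₂, e⟫` to the constant `(‖z - x j₁‖² - ‖z - x j₂‖²) / 2` up to `O(t²)`. If the constant
vanishes this is already quadratic; otherwise `t` is bounded below and the trivial bound `O(t)` is
`O(t²)`. As the differences `x j₁ - x j₂` span `E`, a vector of `E` is controlled by its inner
products with them, and these are the same for `π_E e` as for `e`. -/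

open scoped InnerProductSpace

theorem exists_abs_le_mul_sq_of_abs_sub_le (d V K : ℝ) :
    ∃ C, ∀ a t : ℝ, 0 ≤ t → |a - d| ≤ K * t ^ 2 → |a| ≤ V * t → |a| ≤ C * t ^ 2 := by
  by_cases hd : d = 0
  · exact ⟨K, fun a t _ h _ => by simpa [hd] using h⟩
  refine ⟨|V| * (1 + (|V| + |K|) / |d|), fun a t ht hclose hlin => ?_⟩
  have hd' : 0 < |d| := abs_pos.mpr hd
  have ht_le : t ≤ (1 + (|V| + |K|) / |d|) * t ^ 2 := by
    rcases le_or_gt 1 t with h1 | h1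
    · have : 0 ≤ (|V| + |K|) / |d| := by positivity
      nlinarith
    · have hdt : |d| ≤ (|V| + |K|) * t := by
        have := abs_sub_abs_le_abs_sub d a
        have : V * t ≤ |V| * t := by gcongr; exact le_abs_self V
        have : K * t ^ 2 ≤ |K| * t := by
          nlinarith [le_abs_self K, abs_nonneg K, mul_le_mul_of_nonneg_left h1.le ht]
        linarith [abs_sub_comm a d]
      have : t ≤ (|V| + |K|) / |d| * t ^ 2 := by
        rw [div_mul_eq_mul_div, le_div_iff₀ hd']
        nlinarith
      nlinarith [sq_nonneg t]
  calc |a| ≤ |V| * t := hlin.trans (by gcongr; exact le_abs_self V)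
    _ ≤ |V| * ((1 + (|V| + |K|) / |d|) * t ^ 2) := by gcongr
    _ = _ := by ring

section
variable {F : Type*} [NormedAddCommGroup F] [InnerProductSpace ℝ F]

theorem exists_norm_le_mul_sum_abs_inner {ι : Type*} [Fintype ι] (v : ι → F) :
    ∃ c > (0 : ℝ), ∀ u ∈ Submodule.span ℝ (Set.range v), ‖u‖ ≤ c * ∑ i, |⟪v i, u⟫_ℝ| := by
  set E := Submodule.span ℝ (Set.range v)
  let T : E →ₗ[ℝ] ι → ℝ := LinearMap.pi fun i => (innerₛₗ ℝ (v i)).comp E.subtype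
  have hT : LinearMap.ker T = ⊥ := by
    refine LinearMap.ker_eq_bot'.mpr fun u hu => ?_
    have hperp : E ≤ LinearMap.ker (innerₛₗ ℝ (u : F)) := by
      refine Submodule.span_le.mpr ?_
      rintro _ ⟨i, rfl⟩
      simpa [T, real_inner_comm] using congrFun hu i
    exact Subtype.ext (inner_self_eq_zero.mp (hperp u.2))
  have : FiniteDimensional ℝ E := FiniteDimensional.span_of_finite ℝ (Set.finite_range v)
  obtain ⟨c, hc, hanti⟩ := T.exists_antilipschitzWith hT
  refine ⟨c, hc, fun u hu => ?_⟩
  have hsum : ‖T ⟨u, hu⟩‖ ≤ ∑ i, |⟪v i, u⟫_ℝ| :=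
    (pi_norm_le_iff_of_nonneg (by positivity)).mpr fun i =>
      Finset.single_le_sum (f := fun i => |⟪v i, u⟫_ℝ|) (fun _ _ => abs_nonneg _)
        (Finset.mem_univ i)
  calc ‖u‖ = ‖(⟨u, hu⟩ : E)‖ := rfl
    _ ≤ c * ‖T ⟨u, hu⟩‖ := ZeroHomClass.bound_of_antilipschitz T hanti _
    _ ≤ c * ∑ i, |⟪v i, u⟫_ℝ| := by gcongr

theorem abs_norm_sub_sq_sub_le {x y z h e : F} {L C₁ : ℝ} (hperp : ⟪z - x, h⟫_ℝ = 0)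
    (hy : ‖y - (x + h)‖ ≤ L * ‖h‖)
    (hyz : |⟪z - x, x + h - y⟫_ℝ - ⟪z - x, h⟫_ℝ| ≤ C₁ * ‖h‖ ^ 2) :
    |‖y - (z + h + e)‖ ^ 2 - (‖z - x‖ ^ 2 + 2 * ⟪z - x, e⟫_ℝ)| ≤
      ((|L| + 1) ^ 2 + 2 * |C₁|) * (‖h‖ + ‖e‖) ^ 2 := by
  set u := y - (x + h)
  have hexpand : ‖y - (z + h + e)‖ ^ 2 - (‖z - x‖ ^ 2 + 2 * ⟪z - x, e⟫_ℝ) =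
      ‖u - e‖ ^ 2 - 2 * ⟪z - x, u⟫_ℝ := by
    rw [show y - (z + h + e) = -(z - x) + (u - e) by simp only [u]; abel, norm_add_sq_real,
      norm_neg, inner_neg_left, inner_sub_right]
    ring
  have hu : |⟪z - x, u⟫_ℝ| ≤ |C₁| * (‖h‖ + ‖e‖) ^ 2 := by
    rw [hperp, sub_zero, show x + h - y = -u by simp only [u]; abel, inner_neg_right,
      abs_neg] at hyz
    refine hyz.trans (mul_le_mul (le_abs_self C₁) ?_ (by positivity) (abs_nonneg C₁))
    gcongr
    exact le_add_of_nonneg_right (norm_nonneg e)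
  have hue : ‖u - e‖ ≤ (|L| + 1) * (‖h‖ + ‖e‖) :=
    calc ‖u - e‖ ≤ ‖u‖ + ‖e‖ := norm_sub_le u e
      _ ≤ |L| * ‖h‖ + ‖e‖ := by gcongr; exact hy.trans (by gcongr; exact le_abs_self L)
      _ ≤ (|L| + 1) * (‖h‖ + ‖e‖) := by nlinarith [abs_nonneg L, norm_nonneg h, norm_nonneg e]
  rw [hexpand]
  have := pow_le_pow_left₀ (norm_nonneg _) hue 2
  rw [abs_le] at hu ⊢
  constructor <;> nlinarith [sq_nonneg ‖u - e‖]

theorem abs_inner_sub_sub_le {x₁ x₂ y₁ y₂ z h e : F} {L C₁ : ℝ}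
    (hperp₁ : ⟪z - x₁, h⟫_ℝ = 0) (hperp₂ : ⟪z - x₂, h⟫_ℝ = 0)
    (hy₁ : ‖y₁ - (x₁ + h)‖ ≤ L * ‖h‖) (hy₂ : ‖y₂ - (x₂ + h)‖ ≤ L * ‖h‖)
    (hyz₁ : |⟪z - x₁, x₁ + h - y₁⟫_ℝ - ⟪z - x₁, h⟫_ℝ| ≤ C₁ * ‖h‖ ^ 2)
    (hyz₂ : |⟪z - x₂, x₂ + h - y₂⟫_ℝ - ⟪z - x₂, h⟫_ℝ| ≤ C₁ * ‖h‖ ^ 2)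
    (hw : ‖y₁ - (z + h + e)‖ = ‖y₂ - (z + h + e)‖) :
    |⟪x₁ - x₂, e⟫_ℝ - (‖z - x₁‖ ^ 2 - ‖z - x₂‖ ^ 2) / 2| ≤
      ((|L| + 1) ^ 2 + 2 * |C₁|) * (‖h‖ + ‖e‖) ^ 2 := by
  have h₁ := abs_le.mp (abs_norm_sub_sq_sub_le (e := e) hperp₁ hy₁ hyz₁)
  have h₂ := abs_le.mp (abs_norm_sub_sq_sub_le (e := e) hperp₂ hy₂ hyz₂)
  have hx : ⟪x₁ - x₂, e⟫_ℝ = ⟪z - x₂, e⟫_ℝ - ⟪z - x₁, e⟫_ℝ := by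
    rw [← inner_sub_left, sub_sub_sub_cancel_left]
  rw [hw] at h₁
  rw [hx, abs_le]
  constructor <;> linarith [h₁.1, h₁.2, h₂.1, h₂.2]

end

theorem stmt_10_general {D s : ℕ} (x : Fin s → EuclideanSpace ℝ (Fin D))
    (z : EuclideanSpace ℝ (Fin D))
    (E : Submodule ℝ (EuclideanSpace ℝ (Fin D)))
    (hE : E = Submodule.span ℝ {v | ∃ j₁ j₂, v = x j₁ - x j₂})
    (hzE : ∀ j, z - x j ∈ E) (L C₁ : ℝ) :
    ∃ C₄ > (0 : ℝ), ∀ h : EuclideanSpace ℝ (Fin D), h ∈ Eᗮ →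
      ∀ (y : Fin s → EuclideanSpace ℝ (Fin D)) (e : EuclideanSpace ℝ (Fin D)),
        (∀ j, ‖y j - (x j + h)‖ ≤ L * ‖h‖) →
        (∀ j, |(inner ℝ (z - x j) (x j + h - y j) : ℝ) - (inner ℝ (z - x j) h : ℝ)| ≤
          C₁ * ‖h‖ ^ 2) →
        (∀ j₁ j₂, ‖y j₁ - (z + h + e)‖ = ‖y j₂ - (z + h + e)‖) →
        ‖(Submodule.orthogonalProjectionOnto E e : EuclideanSpace ℝ (Fin D))‖ ≤
          C₄ * (‖h‖ + ‖e‖) ^ 2 := by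
  set v : Fin s × Fin s → EuclideanSpace ℝ (Fin D) := fun p => x p.1 - x p.2
  have hEv : E = Submodule.span ℝ (Set.range v) := by
    rw [hE]; congr 1; ext; simp [v, eq_comm]
  obtain ⟨c, hc, hspan⟩ := exists_norm_le_mul_sum_abs_inner v
  rw [← hEv] at hspan
  choose C hC using fun p : Fin s × Fin s =>
    exists_abs_le_mul_sq_of_abs_sub_le ((‖z - x p.1‖ ^ 2 - ‖z - x p.2‖ ^ 2) / 2) ‖v p‖
      ((|L| + 1) ^ 2 + 2 * |C₁|)
  refine ⟨max (c * ∑ p, C p) 1, lt_max_of_lt_right one_pos, ?_⟩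
  intro h hh y e hy hyz hw
  have hperp j : ⟪z - x j, h⟫_ℝ = 0 := Submodule.inner_right_of_mem_orthogonal (hzE j) hh
  have hpair p : |⟪v p, e⟫_ℝ| ≤ C p * (‖h‖ + ‖e‖) ^ 2 :=
    hC p _ _ (by positivity)
      (abs_inner_sub_sub_le (hperp _) (hperp _) (hy _) (hy _) (hyz _) (hyz _) (hw _ _))
      ((abs_real_inner_le_norm _ _).trans (by gcongr; exact le_add_of_nonneg_left (norm_nonneg h)))
  have hproj p : ⟪v p, E.orthogonalProjectionOnto e⟫_ℝ = ⟪v p, e⟫_ℝ :=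
    E.inner_orthogonalProjectionOnto_eq_of_mem_left ⟨v p, hEv ▸ Submodule.subset_span ⟨p, rfl⟩⟩ e
  calc ‖(E.orthogonalProjectionOnto e : EuclideanSpace ℝ (Fin D))‖
      ≤ c * ∑ p, |⟪v p, e⟫_ℝ| := by
        simpa only [hproj] using hspan _ (E.orthogonalProjectionOnto e).2
    _ ≤ c * ∑ p, C p * (‖h‖ + ‖e‖) ^ 2 := by gcongr with p; exact hpair p
    _ ≤ max (c * ∑ p, C p) 1 * (‖h‖ + ‖e‖) ^ 2 := by
        rw [← Finset.sum_mul, ← mul_assoc]; gcongr; exact le_max_left _ _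

/-- Near-critical points with nearly equal distances to perturbed projections are nearly
perpendicular to the span `E` of the differences of the projections: quantitative bound on
`‖π_E(e)‖`. -/
theorem stmt_10 {D s : ℕ} (x : Fin s → EuclideanSpace ℝ (Fin D))
    (z : EuclideanSpace ℝ (Fin D)) (hinj : Function.Injective x)
    (hz : z ∈ convexHull ℝ (Set.range x))
    (E : Submodule ℝ (EuclideanSpace ℝ (Fin D)))
    (hE : E = Submodule.span ℝ {v | ∃ j₁ j₂, v = x j₁ - x j₂})
    (hzE : ∀ j, z - x j ∈ E) (L C₁ : ℝ) (hL : 0 < L) (hC₁ : 0 < C₁) :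
    ∃ C₄ > (0 : ℝ), ∀ h : EuclideanSpace ℝ (Fin D), h ∈ Eᗮ →
      ∀ (y : Fin s → EuclideanSpace ℝ (Fin D)) (e : EuclideanSpace ℝ (Fin D)),
        (∀ j, ‖y j - (x j + h)‖ ≤ L * ‖h‖) →
        (∀ j, |(inner ℝ (z - x j) (x j + h - y j) : ℝ) - (inner ℝ (z - x j) h : ℝ)| ≤
          C₁ * ‖h‖ ^ 2) →
        (∀ j₁ j₂, ‖y j₁ - (z + h + e)‖ = ‖y j₂ - (z + h + e)‖) →
        ‖(Submodule.orthogonalProjectionOnto E e : EuclideanSpace ℝ (Fin D))‖ ≤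
          C₄ * (‖h‖ + ‖e‖) ^ 2 :=
  stmt_10_general x z E hE hzE L C₁
end

section
/- Let M ⊆ ℝ^D be a compact C² submanifold with reach τ(M) > 0, let A ⊆ M with Hausdorff distance d_H(A, M) ≤ ε, and let z ∈ ℝ^D be a critical point of the distance function d_A with d(z, A) ≤ 4ε. Assume ε < τ(M)/8. Then d(z, M) ≤ 10ε²/τ(M). -/
/-!
Within the reach, the distance to `M` grows at unit rate away from the (unique) nearest point,
so from `z` one can climb to height `d(z,M) + R` (up to an arbitrarily small loss) by moving
only `R`. Climbing `R = τ - d(z,M)` and comparing with a nearest point `y ∈ A`, which exists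
with `⟪x - z, z - y⟫ ≤ 0` because `z` lies in the convex hull of the nearest points, gives the
Attali–Lieutier–Salinas bound `τ² ≤ (τ - d(z,M))² + d(z,A)²`; with `d(z,A) ≤ 4ε < τ/2` this
is `d(z,M) τ ≤ 10 ε²`.
-/

open Metric Set
open scoped RealInnerProductSpace

theorem IsCompact.exists_pos_forall_nonneg_add_mul {X : Type*} [TopologicalSpace X] {K : Set X}
    (hK : IsCompact K) {e b : X → ℝ} (he : Continuous e) (hb : Continuous b)
    (he0 : ∀ q ∈ K, 0 ≤ e q) (hpos : ∀ q ∈ K, b q ≤ 0 → 0 < e q) :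
    ∃ h₀ > 0, ∀ q ∈ K, ∀ h ∈ Icc 0 h₀, 0 ≤ e q + h * b q := by
  obtain ⟨e₀, he₀, hle⟩ := (hK.inter_right (isClosed_le hb continuous_const)).exists_forall_le'
    he.continuousOn (a := 0) fun q hq => hpos q hq.1 hq.2
  obtain ⟨C, hC⟩ := hK.exists_bound_of_continuousOn hb.continuousOn
  refine ⟨e₀ / (|C| + 1), by positivity, fun q hq h ⟨h0, hh⟩ => ?_⟩
  rcases le_or_gt (b q) 0 with hbq | hbq
  · have hbound : -(|C| + 1) ≤ b q := by
      have := (abs_le.mp ((Real.norm_eq_abs _).symm ▸ hC q hq)).1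
      linarith [le_abs_self C]
    have : h * (|C| + 1) ≤ e₀ := (le_div_iff₀ (by positivity)).mp hh
    nlinarith [hle q ⟨hq, hbq⟩]
  · nlinarith [he0 q hq]

section

variable {E : Type*} [NormedAddCommGroup E] [InnerProductSpace ℝ E]

theorem exists_dist_sq_le_of_mem_convexHull {Y : Set E} {z : E} (hz : z ∈ convexHull ℝ Y)
    (x : E) : ∃ y ∈ Y, dist x y ^ 2 ≤ dist x z ^ 2 + dist z y ^ 2 := by
  obtain ⟨y, hy, hzy⟩ := ((innerSL ℝ (x - z)).toLinearMap.convexOn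
    convex_univ).exists_ge_of_mem_convexHull (subset_univ Y) hz
  refine ⟨y, hy, ?_⟩
  have hobtuse : ⟪x - z, z - y⟫ ≤ 0 := by
    simp only [ContinuousLinearMap.coe_coe, innerSL_apply_apply] at hzy
    rw [inner_sub_right]; linarith
  rw [dist_eq_norm, dist_eq_norm, dist_eq_norm, ← sub_add_sub_cancel x z y, norm_add_sq_real]
  linarith

theorem exists_unit_forall_infDist_add_smul_ge {M : Set E} (hM : IsCompact M) {x : E}
    (hx : ∃! p, p ∈ M ∧ dist x p = infDist x M) (hxM : 0 < infDist x M) {c : ℝ} (hc0 : 0 ≤ c)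
    (hc1 : c < 1) :
    ∃ w : E, ‖w‖ = 1 ∧ ∃ h₀ > 0, ∀ h ∈ Icc 0 h₀, infDist x M + c * h ≤ infDist (x + h • w) M := by
  obtain ⟨p, ⟨hpM, hxp⟩, hpuniq⟩ := hx
  set m := infDist x M
  set w := m⁻¹ • (x - p)
  have hw : ‖w‖ = 1 := by
    rw [norm_smul, ← dist_eq_norm, hxp, norm_inv, Real.norm_of_nonneg hxM.le,
      inv_mul_cancel₀ hxM.ne']
  have hwxp : ⟪w, x - p⟫ = m := by
    rw [real_inner_smul_left, real_inner_self_eq_norm_sq, ← dist_eq_norm, hxp]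
    field_simp
  have hdist : ∀ q ∈ M, m ≤ dist x q := fun q hq => infDist_le_dist_of_mem hq
  -- Along `w` the squared distance to `q` changes by `2 h b q + h²`; only points with
  -- `b q ≤ 0` could spoil the rate `c`, and these are bounded away from the nearest point `p`.
  obtain ⟨h₀, hh₀, hmargin⟩ := hM.exists_pos_forall_nonneg_add_mul
    (e := fun q => dist x q ^ 2 - m ^ 2) (b := fun q => 2 * (⟪w, x - q⟫ - m * c))
    (by fun_prop) (by fun_prop) (fun q hq => by nlinarith [hdist q hq])
    (fun q hq hbq => by
      have hqp : q ≠ p := by rintro rfl; nlinarith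
      have : m < dist x q := (hdist q hq).lt_of_ne fun h => hqp (hpuniq q ⟨hq, h.symm⟩)
      nlinarith)
  refine ⟨w, hw, h₀, hh₀, fun h hh => (le_infDist ⟨p, hpM⟩).mpr fun q hq => ?_⟩
  have hsq : dist (x + h • w) q ^ 2 = dist x q ^ 2 + 2 * h * ⟪w, x - q⟫ + h ^ 2 := by
    rw [dist_eq_norm, dist_eq_norm, add_sub_right_comm, norm_add_sq_real, norm_smul, hw,
      real_inner_smul_right, real_inner_comm, Real.norm_of_nonneg hh.1]
    ring
  have hc2 : c ^ 2 * h ^ 2 ≤ h ^ 2 :=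
    mul_le_of_le_one_left (sq_nonneg h) (pow_le_one₀ hc0 hc1.le)
  have hsq_le : (m + c * h) ^ 2 ≤ dist (x + h • w) q ^ 2 := by nlinarith [hmargin q hq h hh]
  have hh0 := hh.1
  exact (sq_le_sq₀ (by positivity) dist_nonneg).mp hsq_le

theorem exists_dist_le_infDist_ge [ProperSpace E] {M : Set E} (hM : IsCompact M) {τ : ℝ}
    (hreach : ∀ x : E, infDist x M < τ → ∃! y, y ∈ M ∧ dist x y = infDist x M)
    {z : E} (hz : 0 < infDist z M) {c R : ℝ} (hc0 : 0 < c) (hc1 : c < 1) (hR : 0 ≤ R)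
    (hRτ : infDist z M + R < τ) :
    ∃ x, dist x z ≤ R ∧ infDist z M + c * R ≤ infDist x M := by
  -- A maximiser of `infDist · M - c * dist · z` on the ball must reach the claimed height:
  -- otherwise it lies inside the ball and, by local growth at rate `(1 + c) / 2 > c`, is not
  -- a maximiser.
  set F : E → ℝ := fun x => infDist x M - c * dist x z
  obtain ⟨x, hxR, hxmax⟩ := (isCompact_closedBall z R).exists_isMaxOn
    ⟨z, mem_closedBall_self hR⟩ (by fun_prop : Continuous F).continuousOn
  refine ⟨x, hxR, ?_⟩
  by_contra! hlt
  have hFx : infDist z M ≤ F x := by simpa [F] using hxmax (mem_closedBall_self hR)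
  have hxz : dist x z < R := by
    by_contra! hRx
    nlinarith
  have hxM : 0 < infDist x M := by nlinarith [dist_nonneg (x := x) (y := z)]
  obtain ⟨w, hw, h₀, hh₀, hgrow⟩ := exists_unit_forall_infDist_add_smul_ge hM
    (hreach x (by nlinarith)) hxM (c := (1 + c) / 2) (by linarith) (by linarith)
  set h := min h₀ (R - dist x z)
  have hh : 0 < h := lt_min hh₀ (by linarith)
  have hdist : dist (x + h • w) z ≤ dist x z + h := by
    calc dist (x + h • w) z ≤ dist (x + h • w) x + dist x z := dist_triangle _ _ _
      _ = dist x z + h := by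
        rw [dist_eq_norm, add_sub_cancel_left, norm_smul, hw, Real.norm_of_nonneg hh.le]; ring
  have hball : x + h • w ∈ closedBall z R :=
    mem_closedBall.mpr (hdist.trans (by linarith [min_le_right h₀ (R - dist x z)]))
  have hgain : F x + (1 - c) / 2 * h ≤ F (x + h • w) := by
    have := hgrow h ⟨hh.le, min_le_left _ _⟩
    simp only [F]
    nlinarith [mul_le_mul_of_nonneg_left hdist hc0.le]
  have hmax : F (x + h • w) ≤ F x := hxmax hball
  nlinarith [mul_pos (sub_pos.mpr hc1) hh]

theorem sq_le_sq_sub_infDist_add_sq [ProperSpace E] {M : Set E} (hM : IsCompact M) {τ : ℝ}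
    (hreach : ∀ x : E, infDist x M < τ → ∃! y, y ∈ M ∧ dist x y = infDist x M)
    {Y : Set E} (hYM : Y ⊆ M) {z : E} (hz : z ∈ convexHull ℝ Y) {r : ℝ}
    (hr : ∀ y ∈ Y, dist z y ≤ r) (hzτ : infDist z M < τ) :
    τ ^ 2 ≤ (τ - infDist z M) ^ 2 + r ^ 2 := by
  set δ := infDist z M
  rcases (infDist_nonneg : 0 ≤ δ).eq_or_lt with hδ | hδ
  · rw [show δ = 0 from hδ.symm]; nlinarith
  -- Climb from `z` to height `δ + t² (τ - δ)` by moving `t (τ - δ)`, compare with a point of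
  -- `Y` seen at an obtuse angle from `z`, and let `t → 1`.
  have hescape : ∀ t ∈ Ioo (0 : ℝ) 1,
      (δ + t * (t * (τ - δ))) ^ 2 ≤ (t * (τ - δ)) ^ 2 + r ^ 2 := by
    rintro t ⟨ht0, ht1⟩
    obtain ⟨x, hxz, hxM⟩ := exists_dist_le_infDist_ge hM hreach hδ ht0 ht1
      (by nlinarith : 0 ≤ t * (τ - δ)) (by nlinarith)
    obtain ⟨y, hy, hxy⟩ := exists_dist_sq_le_of_mem_convexHull hz x
    calc (δ + t * (t * (τ - δ))) ^ 2 ≤ infDist x M ^ 2 := by gcongr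
      _ ≤ dist x y ^ 2 := by gcongr; exacts [infDist_nonneg, infDist_le_dist_of_mem (hYM hy)]
      _ ≤ (t * (τ - δ)) ^ 2 + r ^ 2 := by
        have := hr y hy
        nlinarith [dist_nonneg (x := x) (y := z), dist_nonneg (x := z) (y := y)]
  have hclosed : Icc (0 : ℝ) 1 ⊆
      {t | (δ + t * (t * (τ - δ))) ^ 2 ≤ (t * (τ - δ)) ^ 2 + r ^ 2} := by
    rw [← closure_Ioo zero_ne_one]
    exact closure_minimal hescape (isClosed_le (by fun_prop) (by fun_prop))
  simpa using hclosed (right_mem_Icc.mpr zero_le_one)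

end

theorem mul_le_of_sq_le_sq_sub_add_sq {τ ε δ r : ℝ} (hδ : 0 ≤ δ) (hδr : δ ≤ r)
    (hr : r ≤ 4 * ε) (hε : ε < τ / 8) (h : τ ^ 2 ≤ (τ - δ) ^ 2 + r ^ 2) :
    δ * τ ≤ 10 * ε ^ 2 := by
  have hτ : 0 < τ := by linarith
  have hquad : δ * (2 * τ - δ) ≤ 16 * ε ^ 2 := by nlinarith
  -- Bootstrap: the crude `δ ≤ 4 ε` improves to `δ ≤ 4 ε / 3`, which suffices.
  have hδ' : δ ≤ 4 / 3 * ε := by nlinarith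
  nlinarith

theorem stmt_14_general {D : ℕ} (M A : Set (EuclideanSpace ℝ (Fin D))) (hM : IsCompact M)
    (hAM : A ⊆ M) (hAne : A.Nonempty)
    (τ ε : ℝ) (hτ : 0 < τ)
    (hreach : ∀ x : EuclideanSpace ℝ (Fin D), Metric.infDist x M < τ →
      ∃! y, y ∈ M ∧ dist x y = Metric.infDist x M)
    (hε : ε < τ / 8)
    (z : EuclideanSpace ℝ (Fin D))
    (hcrit : z ∈ convexHull ℝ {y | y ∈ A ∧ dist z y = Metric.infDist z A})
    (hclose : Metric.infDist z A ≤ 4 * ε) :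
    Metric.infDist z M ≤ 10 * ε ^ 2 / τ := by
  have hMA : infDist z M ≤ infDist z A := infDist_le_infDist_of_subset hAM hAne
  have hALS := sq_le_sq_sub_infDist_add_sq hM hreach (fun y hy => hAM hy.1) hcrit
    (fun y hy => hy.2.le) (by linarith)
  rw [le_div_iff₀ hτ]
  exact mul_le_of_sq_le_sq_sub_add_sq infDist_nonneg hMA hclose hε hALS

/-- A critical point of the distance to a sample `A ⊆ M` (`d_H(A,M) ≤ ε < τ/8`) that is
within `4ε` of `A` is within `10ε²/τ` of `M`, where `τ > 0` is (a lower bound on) the reach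
of the compact set `M`. -/
theorem stmt_14 {D : ℕ} (M A : Set (EuclideanSpace ℝ (Fin D))) (hM : IsCompact M)
    (hMne : M.Nonempty) (hAM : A ⊆ M) (hAne : A.Nonempty)
    (τ ε : ℝ) (hτ : 0 < τ)
    (hreach : ∀ x : EuclideanSpace ℝ (Fin D), Metric.infDist x M < τ →
      ∃! y, y ∈ M ∧ dist x y = Metric.infDist x M)
    (hH : Metric.hausdorffDist A M ≤ ε) (hε : ε < τ / 8)
    (z : EuclideanSpace ℝ (Fin D)) (hzA : z ∉ A)
    (hcrit : z ∈ convexHull ℝ {y | y ∈ A ∧ dist z y = Metric.infDist z A})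
    (hclose : Metric.infDist z A ≤ 4 * ε) :
    Metric.infDist z M ≤ 10 * ε ^ 2 / τ :=
  stmt_14_general M A hM hAM hAne τ ε hτ hreach hε z hcrit hclose
end

section
/- Let M ⊆ ℝ^D be a compact set and A ⊆ M with Hausdorff distance d_H(A,M) ≤ ε. Let z ∉ A be a critical point of d_A (i.e., z ∈ Conv(π_A(z))), let x ∈ π_M(z) and y ∈ π_A(x). Suppose M is a C² submanifold with reach τ > 0, so that the vector z − x is orthogonal to the tangent space T_x M and |⟨z − x, x − y⟩| ≤ d(z,M)·‖x − y‖²/(2τ) (Federer's quadratic bound). Then d(z,A)² ≤ d(z,M)² + ε²·(1 + d(z,M)/τ). -/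
open Metric

open scoped RealInnerProductSpace

lemma infDist_le_hausdorffDist_of_subset {α : Type*} [PseudoMetricSpace α] {A M : Set α}
    {x : α} (hM : Bornology.IsBounded M) (hAM : A ⊆ M) (hA : A.Nonempty) (hx : x ∈ M) :
    infDist x A ≤ hausdorffDist A M := by
  rw [hausdorffDist_comm]
  exact infDist_le_hausdorffDist_of_mem hx <|
    hausdorffEDist_ne_top_of_nonempty_of_bounded ⟨x, hx⟩ hA hM (hM.subset hAM)

lemma dist_sq_le_of_inner_le {E : Type*} [NormedAddCommGroup E] [InnerProductSpace ℝ E]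
    {x y z : E} {r τ : ℝ} (h : ⟪z - x, x - y⟫ ≤ r * ‖x - y‖ ^ 2 / (2 * τ)) :
    dist z y ^ 2 ≤ dist z x ^ 2 + dist x y ^ 2 * (1 + r / τ) := by
  have hsplit : z - y = (z - x) + (x - y) := by abel
  calc dist z y ^ 2 = dist z x ^ 2 + dist x y ^ 2 + 2 * ⟪z - x, x - y⟫ := by
        rw [dist_eq_norm, dist_eq_norm, dist_eq_norm, hsplit, norm_add_sq_real]; ring
    _ ≤ dist z x ^ 2 + dist x y ^ 2 + 2 * (r * dist x y ^ 2 / (2 * τ)) := by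
        rw [dist_eq_norm x y]; gcongr
    _ = dist z x ^ 2 + dist x y ^ 2 * (1 + r / τ) := by ring

theorem stmt_16_general {D : ℕ} (M A : Set (EuclideanSpace ℝ (Fin D))) (hM : IsCompact M)
    (hAM : A ⊆ M) (ε τ : ℝ) (hτ : 0 < τ)
    (hH : Metric.hausdorffDist A M ≤ ε)
    (z x y : EuclideanSpace ℝ (Fin D))
    (hx : x ∈ M ∧ dist z x = Metric.infDist z M)
    (hy : y ∈ A ∧ dist x y = Metric.infDist x A)
    (hFed : |(inner ℝ (z - x) (x - y) : ℝ)| ≤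
      Metric.infDist z M * ‖x - y‖ ^ 2 / (2 * τ)) :
    Metric.infDist z A ^ 2 ≤
      Metric.infDist z M ^ 2 + ε ^ 2 * (1 + Metric.infDist z M / τ) := by
  obtain ⟨hxM, hzx⟩ := hx
  obtain ⟨hyA, hxy⟩ := hy
  have hxy_le : dist x y ≤ ε := hxy ▸
    (infDist_le_hausdorffDist_of_subset hM.isBounded hAM ⟨y, hyA⟩ hxM).trans hH
  have hfactor : 0 ≤ 1 + infDist z M / τ :=
    add_nonneg zero_le_one (div_nonneg infDist_nonneg hτ.le)
  calc infDist z A ^ 2 ≤ dist z y ^ 2 := by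
        gcongr
        · exact infDist_nonneg
        · exact infDist_le_dist_of_mem hyA
    _ ≤ dist z x ^ 2 + dist x y ^ 2 * (1 + infDist z M / τ) :=
        dist_sq_le_of_inner_le ((le_abs_self _).trans hFed)
    _ ≤ infDist z M ^ 2 + ε ^ 2 * (1 + infDist z M / τ) := by
        rw [hzx]; gcongr

/-- Improved comparison of `d(z,A)` and `d(z,M)` for a critical point `z` of `d_A`, using
Federer's quadratic bound for sets of reach `≥ τ`. -/
theorem stmt_16 {D : ℕ} (M A : Set (EuclideanSpace ℝ (Fin D))) (hM : IsCompact M)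
    (hAM : A ⊆ M) (hAne : A.Nonempty) (ε τ : ℝ) (hτ : 0 < τ)
    (hH : Metric.hausdorffDist A M ≤ ε)
    (z x y : EuclideanSpace ℝ (Fin D)) (hzA : z ∉ A)
    (hcrit : z ∈ convexHull ℝ {w | w ∈ A ∧ dist z w = Metric.infDist z A})
    (hx : x ∈ M ∧ dist z x = Metric.infDist z M)
    (hy : y ∈ A ∧ dist x y = Metric.infDist x A)
    (hFed : |(inner ℝ (z - x) (x - y) : ℝ)| ≤
      Metric.infDist z M * ‖x - y‖ ^ 2 / (2 * τ)) :
    Metric.infDist z A ^ 2 ≤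
      Metric.infDist z M ^ 2 + ε ^ 2 * (1 + Metric.infDist z M / τ) :=
  stmt_16_general M A hM hAM ε τ hτ hH z x y hx hy hFed
end
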